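/- Let Λ be a k-graph with fundamental groupoid (𝒢(Λ), i) and let p : Ω → Λ be a connected covering. Then for every vertex x of Λ, the family {p_*π(Ω,v) : v a vertex of Ω with p(v) = x} is a conjugacy class of subgroups of the fundamental group π(Λ,x); that is, any two subgroups in this family are conjugate in π(Λ,x), and every subgroup of π(Λ,x) conjugate to a member of the family is itself a member of the family. -/

import Mathlib

/-!
Arrows-only formalization of `k`-graphs (higher-rank graphs), their coverings,
fundamental groupoids, and groupoid actions, following Pask–Quigg–Raeburn,
"Coverings of k-graphs".

A small category is encoded by its set of arrows `A` together with
source/range maps `src rng : A → A` (whose common image is the set of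
identities = vertices) and a (guarded) total composition `comp : A → A → A`,
where `comp f g` is the composite "f after g", meaningful when `src f = rng g`.
A `k`-graph additionally has a degree map `deg : A → (Fin k → ℕ)` which is
functorial and satisfies the unique factorization property.
-/

namespace KGraphCovering

/-- A `k`-graph in arrows-only form. -/
structure KGraphStruct (k : ℕ) (A : Type) : Type where
  src : A → A
  rng : A → A
  comp : A → A → A
  deg : A → (Fin k → ℕ)
  src_src : ∀ f, src (src f) = src f
  rng_src : ∀ f, rng (src f) = src f
  src_rng : ∀ f, src (rng f) = rng f
  rng_rng : ∀ f, rng (rng f) = rng f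
  comp_src_id : ∀ f, comp f (src f) = f
  rng_comp_id : ∀ f, comp (rng f) f = f
  src_comp : ∀ f g, src f = rng g → src (comp f g) = src g
  rng_comp : ∀ f g, src f = rng g → rng (comp f g) = rng f
  assoc : ∀ f g h, src f = rng g → src g = rng h →
    comp (comp f g) h = comp f (comp g h)
  deg_comp : ∀ f g, src f = rng g → deg (comp f g) = deg f + deg g
  deg_src : ∀ f, deg (src f) = 0
  factor : ∀ f m n, deg f = m + n →
    ∃! q : A × A, src q.1 = rng q.2 ∧ deg q.1 = m ∧ deg q.2 = n ∧ comp q.1 q.2 = f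

namespace KGraphStruct

variable {k : ℕ} {A : Type}

/-- The vertices (objects) are the identity arrows. -/
def IsVertex (S : KGraphStruct k A) (v : A) : Prop := S.src v = v

/-- A `k`-graph is connected if the equivalence relation generated by
"there is a morphism from `v` to `u`" relates all pairs of vertices. -/
def Connected (S : KGraphStruct k A) : Prop :=
  ∀ u v, S.IsVertex u → S.IsVertex v →
    Relation.EqvGen (fun a b => ∃ f, S.rng f = a ∧ S.src f = b) u v

end KGraphStruct

/-- A groupoid in arrows-only form. -/
structure GroupoidStruct (B : Type) : Type where
  src : B → B
  rng : B → B
  comp : B → B → B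
  inv : B → B
  src_src : ∀ f, src (src f) = src f
  rng_src : ∀ f, rng (src f) = src f
  src_rng : ∀ f, src (rng f) = rng f
  rng_rng : ∀ f, rng (rng f) = rng f
  comp_src_id : ∀ f, comp f (src f) = f
  rng_comp_id : ∀ f, comp (rng f) f = f
  src_comp : ∀ f g, src f = rng g → src (comp f g) = src g
  rng_comp : ∀ f g, src f = rng g → rng (comp f g) = rng f
  assoc : ∀ f g h, src f = rng g → src g = rng h →
    comp (comp f g) h = comp f (comp g h)
  src_inv : ∀ f, src (inv f) = rng f
  rng_inv : ∀ f, rng (inv f) = src f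
  inv_comp_self : ∀ f, comp (inv f) f = src f
  comp_inv_self : ∀ f, comp f (inv f) = rng f

namespace GroupoidStruct

variable {B : Type}

/-- The vertices (objects) of a groupoid are the identity arrows. -/
def IsVertex (G : GroupoidStruct B) (v : B) : Prop := G.src v = v

/-- A subgroup of the isotropy group `x𝒢x`, as a set of arrows. -/
def IsSubgroupAt (G : GroupoidStruct B) (x : B) (H : Set B) : Prop :=
  (∀ a ∈ H, G.src a = x ∧ G.rng a = x) ∧ x ∈ H ∧
  (∀ a ∈ H, ∀ b ∈ H, G.comp a b ∈ H) ∧ (∀ a ∈ H, G.inv a ∈ H)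

/-- `K` is a conjugate of `H` in the isotropy group at `x`. -/
def ConjAt (G : GroupoidStruct B) (x : B) (H K : Set B) : Prop :=
  ∃ g, G.src g = x ∧ G.rng g = x ∧
    K = (fun a => G.comp (G.comp g a) (G.inv g)) '' H

/-- `H` is a normal subset of the isotropy group at `x`. -/
def IsNormalAt (G : GroupoidStruct B) (x : B) (H : Set B) : Prop :=
  ∀ g, G.src g = x → G.rng g = x → ∀ a ∈ H, G.comp (G.comp g a) (G.inv g) ∈ H

/-- The normalizer of `H` in the isotropy group at `x`. -/
def normalizerAt (G : GroupoidStruct B) (x : B) (H : Set B) : Set B :=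
  {g | G.src g = x ∧ G.rng g = x ∧
    (fun a => G.comp (G.comp g a) (G.inv g)) '' H = H}

end GroupoidStruct

/-- `f` is a morphism of `k`-graphs (a degree-preserving functor). -/
def IsKGraphHomFun {k : ℕ} {A A' : Type} (S : KGraphStruct k A)
    (T : KGraphStruct k A') (f : A → A') : Prop :=
  (∀ a, f (S.src a) = T.src (f a)) ∧
  (∀ a, f (S.rng a) = T.rng (f a)) ∧
  (∀ a b, S.src a = S.rng b → f (S.comp a b) = T.comp (f a) (f b)) ∧
  (∀ a, T.deg (f a) = S.deg a)

/-- `f` is a functor from a `k`-graph to a groupoid. -/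
def IsFunctorToGpdFun {k : ℕ} {A B : Type} (S : KGraphStruct k A)
    (G : GroupoidStruct B) (f : A → B) : Prop :=
  (∀ a, f (S.src a) = G.src (f a)) ∧
  (∀ a, f (S.rng a) = G.rng (f a)) ∧
  (∀ a b, S.src a = S.rng b → f (S.comp a b) = G.comp (f a) (f b))

/-- `f` is a morphism of groupoids (a functor). -/
def IsGpdHomFun {B C : Type} (G : GroupoidStruct B) (H : GroupoidStruct C)
    (f : B → C) : Prop :=
  (∀ a, f (G.src a) = H.src (f a)) ∧
  (∀ a, f (G.rng a) = H.rng (f a)) ∧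
  (∀ a b, G.src a = G.rng b → f (G.comp a b) = H.comp (f a) (f b))

/-- `p : Ω → Λ` is a covering of `k`-graphs: a surjective `k`-graph morphism
which maps `Ωv` bijectively onto `Λp(v)` and `vΩ` bijectively onto `p(v)Λ`
for every vertex `v` of `Ω`. -/
structure IsCovering {k : ℕ} {A A' : Type} (S : KGraphStruct k A')
    (T : KGraphStruct k A) (p : A' → A) : Prop where
  hom : IsKGraphHomFun S T p
  surj : Function.Surjective p
  src_inj : ∀ a b, S.src a = S.src b → p a = p b → a = b
  src_lift : ∀ v, S.IsVertex v → ∀ g, T.src g = p v → ∃ a, S.src a = v ∧ p a = g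
  rng_inj : ∀ a b, S.rng a = S.rng b → p a = p b → a = b
  rng_lift : ∀ v, S.IsVertex v → ∀ g, T.rng g = p v → ∃ a, S.rng a = v ∧ p a = g

/-- A fundamental groupoid of a `k`-graph `S`: a groupoid `G` whose object
set is identified with the vertex set of `S` via the canonical functor `i`
(which is bijective on objects), with the universal property that every
functor from `S` to a groupoid factors uniquely through `i`. -/
structure FundamentalGroupoid {k : ℕ} {A : Type} (S : KGraphStruct k A) :
    Type 1 where
  B : Type
  G : GroupoidStruct B
  i : A → B
  i_hom : IsFunctorToGpdFun S G i
  obj_bij : ∀ w, G.IsVertex w → ∃! v, S.IsVertex v ∧ i v = w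
  univ : ∀ {C : Type} (H : GroupoidStruct C) (F : A → C),
    IsFunctorToGpdFun S H F →
    ∃! F' : B → C, IsGpdHomFun G H F' ∧ ∀ a, F' (i a) = F a

/-- The fundamental group `π(Λ,x)` at a vertex `x`, as the isotropy of the
fundamental groupoid at `i x`. -/
def FundamentalGroupoid.pi1 {k : ℕ} {A : Type} {S : KGraphStruct k A}
    (F : FundamentalGroupoid S) (x : A) : Set F.B :=
  {a | F.G.src a = F.i x ∧ F.G.rng a = F.i x}

/-- An automorphism of the covering `p : Ω → Λ`. -/
def IsCoveringAut {k : ℕ} {A A' : Type} (Ω : KGraphStruct k A')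
    (Λ : KGraphStruct k A) (p : A' → A) (φ : A' → A') : Prop :=
  Function.Bijective φ ∧ IsKGraphHomFun Ω Ω φ ∧ ∀ a, p (φ a) = p a

/-- The action of the fundamental groupoid `F = 𝒢(Λ)` on the vertex set of a
covering `p : Ω → Λ`, determined by `i(p(λ)) ⬝ s(λ) = r(λ)`.  The fiber of a
vertex `w` of `Ω` is over the object `F.i (p w)`. -/
structure CorrespondingAction {k : ℕ} {A A' : Type} (Ω : KGraphStruct k A')
    (Λ : KGraphStruct k A) (F : FundamentalGroupoid Λ) (p : A' → A)
    (act : F.B → A' → A') : Prop where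
  act_vertex : ∀ a w, Ω.IsVertex w → F.G.src a = F.i (p w) →
    Ω.IsVertex (act a w) ∧ F.i (p (act a w)) = F.G.rng a
  act_id : ∀ w, Ω.IsVertex w → act (F.i (p w)) w = w
  act_comp : ∀ a b w, Ω.IsVertex w → F.G.src b = F.i (p w) →
    F.G.src a = F.G.rng b → act (F.G.comp a b) w = act a (act b w)
  act_cov : ∀ lam, act (F.i (p lam)) (Ω.src lam) = Ω.rng lam

/-- An action of a groupoid `G` on a set `V`, presented by an anchor map
`fib : V → B` (landing in vertices) and a guarded action map. -/
structure GpdActionStruct {B : Type} (G : GroupoidStruct B) (V : Type) :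
    Type where
  fib : V → B
  act : B → V → V
  fib_vertex : ∀ v, G.src (fib v) = fib v
  act_fib : ∀ a v, G.src a = fib v → fib (act a v) = G.rng a
  act_id : ∀ v, act (fib v) v = v
  act_comp : ∀ a b v, G.src b = fib v → G.src a = G.rng b →
    act (G.comp a b) v = act a (act b v)

namespace GpdActionStruct

variable {B V W : Type} {G : GroupoidStruct B}

/-- Transitivity of a groupoid action. -/
def Transitive (ρ : GpdActionStruct G V) : Prop :=
  ∀ u v : V, ∃ a, G.src a = ρ.fib v ∧ ρ.act a v = u

/-- The stability group of the action at `v`. -/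
def stab (ρ : GpdActionStruct G V) (v : V) : Set B :=
  {a | G.src a = ρ.fib v ∧ G.rng a = ρ.fib v ∧ ρ.act a v = v}

/-- Freeness of a groupoid action: all stability groups are trivial. -/
def Free (ρ : GpdActionStruct G V) : Prop :=
  ∀ (v : V) (a : B), a ∈ ρ.stab v → a = ρ.fib v

end GpdActionStruct

/-- A morphism of actions of the groupoid `G`: a fiber-preserving
equivariant map. -/
def IsActionHom {B V W : Type} {G : GroupoidStruct B}
    (ρ : GpdActionStruct G V) (σ : GpdActionStruct G W) (φ : V → W) : Prop :=
  (∀ v, σ.fib (φ v) = ρ.fib v) ∧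
  ∀ a v, G.src a = ρ.fib v → φ (ρ.act a v) = σ.act a (φ v)

/-- An automorphism of an action of the groupoid `G`. -/
def IsActionAut {B V : Type} {G : GroupoidStruct B}
    (ρ : GpdActionStruct G V) (φ : V → V) : Prop :=
  Function.Bijective φ ∧ IsActionHom ρ ρ φ

/-- A universal covering: a connected covering admitting a morphism of
coverings to every connected covering of the base. -/
def IsUniversalCovering {k : ℕ} {A A' : Type} (Ω : KGraphStruct k A')
    (Λ : KGraphStruct k A) (p : A' → A) : Prop :=
  IsCovering Ω Λ p ∧ Ω.Connected ∧
  ∀ (A'' : Type) (Sg : KGraphStruct k A'') (q : A'' → A),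
    IsCovering Sg Λ q → Sg.Connected →
    ∃ φ : A' → A'', IsKGraphHomFun Ω Sg φ ∧ ∀ a, q (φ a) = p a

end KGraphCovering

/-!
Conjugation by an arrow `c : v → u` of `𝒢(Ω)` carries `π(Ω,v)` onto `π(Ω,u)`, and `Ω` is
connected, so any two of the subgroups `p_*π(Ω,v)` over `x` are conjugate. Conversely, every
`g ∈ π(Λ,x)` lifts to an arrow of `𝒢(Ω)` starting at any given `v` over `x`: the arrows
which lift, and whose inverses lift, contain `i(Λ)` by the covering property and form a
subgroupoid, which by the universal property of `𝒢(Λ)` is everything. If the lift ends at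
`u`, then `u` lies over `x` and conjugation by `g` carries `p_*π(Ω,v)` onto `p_*π(Ω,u)`.
-/

namespace KGraphCovering

namespace GroupoidStruct

variable {B : Type} (G : GroupoidStruct B)

theorem eq_inv_of_comp_eq_src {x y : B} (h : G.src y = G.rng x)
    (hyx : G.comp y x = G.src x) : y = G.inv x :=
  calc y = G.comp y (G.comp x (G.inv x)) := by rw [G.comp_inv_self, ← h, G.comp_src_id]
    _ = G.comp (G.comp y x) (G.inv x) := (G.assoc y x _ h (G.rng_inv x).symm).symm
    _ = G.inv x := by rw [hyx, ← G.rng_inv, G.rng_comp_id]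

theorem inv_inv (a : B) : G.inv (G.inv a) = a :=
  (G.eq_inv_of_comp_eq_src (G.rng_inv a).symm (by rw [G.comp_inv_self, G.src_inv])).symm

theorem inv_comp {a b : B} (h : G.src a = G.rng b) :
    G.inv (G.comp a b) = G.comp (G.inv b) (G.inv a) := by
  have hba : G.src (G.inv b) = G.rng (G.inv a) := by rw [G.src_inv, G.rng_inv, h]
  refine (G.eq_inv_of_comp_eq_src ?_ ?_).symm
  · rw [G.src_comp _ _ hba, G.src_inv, G.rng_comp _ _ h]
  · rw [G.assoc _ _ _ hba (by rw [G.src_inv, G.rng_comp _ _ h]),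
      ← G.assoc _ _ _ (G.src_inv a) h, G.inv_comp_self, h, G.rng_comp_id, G.inv_comp_self,
      G.src_comp _ _ h]

def isotropy (e : B) : Set B := {a | G.src a = e ∧ G.rng a = e}

def conj (c a : B) : B := G.comp (G.comp c a) (G.inv c)

theorem conj_mem_isotropy {c a : B} (ha : a ∈ G.isotropy (G.src c)) :
    G.conj c a ∈ G.isotropy (G.rng c) := by
  have hca : G.src c = G.rng a := ha.2.symm
  have hg : G.src (G.comp c a) = G.rng (G.inv c) := by rw [G.src_comp _ _ hca, G.rng_inv, ha.1]
  exact ⟨by rw [conj, G.src_comp _ _ hg, G.src_inv],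
    by rw [conj, G.rng_comp _ _ hg, G.rng_comp _ _ hca]⟩

theorem conj_inv_conj {c a : B} (ha : a ∈ G.isotropy (G.src c)) :
    G.conj (G.inv c) (G.conj c a) = a := by
  have hca : G.src c = G.rng a := ha.2.symm
  have hcancel : G.comp (G.inv c) (G.comp c a) = a := by
    rw [← G.assoc _ _ _ (G.src_inv c) hca, G.inv_comp_self, hca, G.rng_comp_id]
  have hcancel' : G.comp (G.comp a (G.inv c)) c = a := by
    rw [G.assoc _ _ _ (by rw [G.rng_inv, ha.1]) (G.src_inv c), G.inv_comp_self, ← ha.1,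
      G.comp_src_id]
  rw [conj, conj, G.inv_inv, ← G.assoc _ _ _ (by rw [G.src_inv, G.rng_comp _ _ hca])
    (by rw [G.src_comp _ _ hca, G.rng_inv, ha.1]), hcancel, hcancel']

theorem conj_image_isotropy (c : B) :
    G.conj c '' G.isotropy (G.src c) = G.isotropy (G.rng c) := by
  refine subset_antisymm (Set.image_subset_iff.2 fun a => G.conj_mem_isotropy) fun a ha => ?_
  have ha' : a ∈ G.isotropy (G.src (G.inv c)) := by rwa [G.src_inv]
  refine ⟨G.conj (G.inv c) a, by simpa only [G.rng_inv] using G.conj_mem_isotropy ha', ?_⟩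
  simpa only [G.inv_inv] using G.conj_inv_conj ha'

section Subgroupoid

variable (P : B → Prop) (inv_mem : ∀ a, P a → P (G.inv a))
  (comp_mem : ∀ a b, P a → P b → G.src a = G.rng b → P (G.comp a b))

section
include inv_mem comp_mem

theorem src_mem {a : B} (ha : P a) : P (G.src a) :=
  G.inv_comp_self a ▸ comp_mem _ _ (inv_mem a ha) ha (G.src_inv a)

theorem rng_mem {a : B} (ha : P a) : P (G.rng a) :=
  G.comp_inv_self a ▸ comp_mem _ _ ha (inv_mem a ha) (G.rng_inv a).symm

end

open Classical in
/-- Composites of non-composable arrows are junk. -/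
noncomputable def subgroupoid : GroupoidStruct {b // P b} where
  src a := ⟨G.src a, G.src_mem P inv_mem comp_mem a.2⟩
  rng a := ⟨G.rng a, G.rng_mem P inv_mem comp_mem a.2⟩
  inv a := ⟨G.inv a, inv_mem a a.2⟩
  comp a b := if h : G.src a = G.rng b then ⟨G.comp a b, comp_mem a b a.2 b.2 h⟩ else a
  src_src a := Subtype.ext (G.src_src a)
  rng_src a := Subtype.ext (G.rng_src a)
  src_rng a := Subtype.ext (G.src_rng a)
  rng_rng a := Subtype.ext (G.rng_rng a)
  comp_src_id a := by rw [dif_pos (G.rng_src a).symm]; exact Subtype.ext (G.comp_src_id a)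
  rng_comp_id a := by rw [dif_pos (G.src_rng a)]; exact Subtype.ext (G.rng_comp_id a)
  src_comp a b h := by
    rw [dif_pos (congrArg Subtype.val h)]
    exact Subtype.ext (G.src_comp a b (congrArg Subtype.val h))
  rng_comp a b h := by
    rw [dif_pos (congrArg Subtype.val h)]
    exact Subtype.ext (G.rng_comp a b (congrArg Subtype.val h))
  assoc a b c hab hbc := by
    have hab' : G.src a = G.rng b := congrArg Subtype.val hab
    have hbc' : G.src b = G.rng c := congrArg Subtype.val hbc
    rw [dif_pos hab', dif_pos hbc', dif_pos (by rw [G.src_comp _ _ hab', hbc']),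
      dif_pos (by rw [G.rng_comp _ _ hbc', hab'])]
    exact Subtype.ext (G.assoc a b c hab' hbc')
  src_inv a := Subtype.ext (G.src_inv a)
  rng_inv a := Subtype.ext (G.rng_inv a)
  inv_comp_self a := by rw [dif_pos (G.src_inv a)]; exact Subtype.ext (G.inv_comp_self a)
  comp_inv_self a := by
    rw [dif_pos (G.rng_inv a).symm]; exact Subtype.ext (G.comp_inv_self a)

theorem isGpdHomFun_subgroupoid_val :
    IsGpdHomFun (G.subgroupoid P inv_mem comp_mem) G Subtype.val := by
  refine ⟨fun _ => rfl, fun _ => rfl, fun a b h => ?_⟩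
  dsimp only [subgroupoid]
  rw [dif_pos (show G.src a = G.rng b from congrArg Subtype.val h)]

theorem isFunctorToGpdFun_subgroupoid {k : ℕ} {A : Type} {S : KGraphStruct k A} {f : A → B}
    (hf : IsFunctorToGpdFun S G f) (hP : ∀ a, P (f a)) :
    IsFunctorToGpdFun S (G.subgroupoid P inv_mem comp_mem) fun a => ⟨f a, hP a⟩ := by
  refine ⟨fun a => Subtype.ext (hf.1 a), fun a => Subtype.ext (hf.2.1 a), fun a b h => ?_⟩
  dsimp only [subgroupoid]
  rw [dif_pos (by rw [← hf.1, ← hf.2.1, h])]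
  exact Subtype.ext (hf.2.2 a b h)

end Subgroupoid

end GroupoidStruct

namespace IsGpdHomFun

variable {B C D : Type} {G : GroupoidStruct B} {H : GroupoidStruct C} {f : B → C}

theorem id : IsGpdHomFun G G id := ⟨fun _ => rfl, fun _ => rfl, fun _ _ _ => rfl⟩

theorem comp {K : GroupoidStruct D} {g : C → D} (hg : IsGpdHomFun H K g)
    (hf : IsGpdHomFun G H f) : IsGpdHomFun G K (g ∘ f) :=
  ⟨fun a => by simp only [Function.comp, hf.1, hg.1],
    fun a => by simp only [Function.comp, hf.2.1, hg.2.1],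
    fun a b h => by
      simp only [Function.comp, hf.2.2 a b h]
      exact hg.2.2 _ _ (by rw [← hf.1, ← hf.2.1, h])⟩

theorem map_inv (hf : IsGpdHomFun G H f) (a : B) : f (G.inv a) = H.inv (f a) :=
  H.eq_inv_of_comp_eq_src (by rw [← hf.1, G.src_inv, hf.2.1])
    (by rw [← hf.2.2 _ _ (G.src_inv a), G.inv_comp_self, hf.1])

theorem map_conj (hf : IsGpdHomFun G H f) {c a : B} (ha : a ∈ G.isotropy (G.src c)) :
    f (G.conj c a) = H.conj (f c) (f a) := by
  have hca : G.src c = G.rng a := ha.2.symm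
  rw [GroupoidStruct.conj, hf.2.2 _ _ (by rw [G.src_comp _ _ hca, G.rng_inv, ha.1]),
    hf.2.2 _ _ hca, hf.map_inv, GroupoidStruct.conj]

theorem image_isotropy_rng (hf : IsGpdHomFun G H f) (c : B) :
    f '' G.isotropy (G.rng c) = H.conj (f c) '' (f '' G.isotropy (G.src c)) := by
  rw [← G.conj_image_isotropy, Set.image_image, Set.image_image]
  exact Set.image_congr fun a ha => hf.map_conj ha

end IsGpdHomFun

theorem IsKGraphHomFun.isVertex_map {k : ℕ} {A A' : Type} {S : KGraphStruct k A}
    {T : KGraphStruct k A'} {f : A → A'} (hf : IsKGraphHomFun S T f) {v : A}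
    (hv : S.IsVertex v) : T.IsVertex (f v) := by
  rw [KGraphStruct.IsVertex, ← hf.1, hv]

namespace FundamentalGroupoid

variable {k : ℕ} {A : Type} {S : KGraphStruct k A} (F : FundamentalGroupoid S)

theorem induction (P : F.B → Prop) (i_mem : ∀ a, P (F.i a))
    (inv_mem : ∀ a, P a → P (F.G.inv a))
    (comp_mem : ∀ a b, P a → P b → F.G.src a = F.G.rng b → P (F.G.comp a b)) (b : F.B) :
    P b := by
  obtain ⟨r, ⟨hr, hri⟩, -⟩ := F.univ (F.G.subgroupoid P inv_mem comp_mem) _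
    (F.G.isFunctorToGpdFun_subgroupoid P inv_mem comp_mem F.i_hom i_mem)
  obtain ⟨_, -, huniq⟩ := F.univ F.G F.i F.i_hom
  have hr_id : Subtype.val ∘ r = id :=
    (huniq _ ⟨(F.G.isGpdHomFun_subgroupoid_val P inv_mem comp_mem).comp hr,
      fun a => congrArg Subtype.val (hri a)⟩).trans
      (huniq _ ⟨IsGpdHomFun.id, fun _ => rfl⟩).symm
  have hrb : (r b).1 = b := congrFun hr_id b
  exact hrb ▸ (r b).2

theorem i_injOn_vertices {v w : A} (hv : S.IsVertex v) (hw : S.IsVertex w)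
    (h : F.i v = F.i w) : v = w := by
  have hiv : F.G.IsVertex (F.i v) := by rw [GroupoidStruct.IsVertex, ← F.i_hom.1, hv]
  exact (F.obj_bij _ hiv).unique ⟨hv, rfl⟩ ⟨hw, h.symm⟩

theorem exists_arrow_of_connected (hS : S.Connected) {v u : A} (hv : S.IsVertex v)
    (hu : S.IsVertex u) : ∃ c, F.G.src c = F.i v ∧ F.G.rng c = F.i u := by
  let R : A → A → Prop := fun a b =>
    ∃ c, F.G.src c = F.i (S.src b) ∧ F.G.rng c = F.i (S.src a)
  have hR : Equivalence R :=
    ⟨fun a => ⟨F.i (S.src a), by rw [← F.i_hom.1, S.src_src],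
        by rw [← F.i_hom.2.1, S.rng_src]⟩,
      fun ⟨c, hc⟩ => ⟨F.G.inv c, by rw [F.G.src_inv, hc.2], by rw [F.G.rng_inv, hc.1]⟩,
      fun ⟨c, hc⟩ ⟨d, hd⟩ =>
        have hcd : F.G.src c = F.G.rng d := by rw [hc.1, hd.2]
        ⟨F.G.comp c d, by rw [F.G.src_comp _ _ hcd, hd.1],
          by rw [F.G.rng_comp _ _ hcd, hc.2]⟩⟩
  have hmorph : ∀ a b, (∃ f, S.rng f = a ∧ S.src f = b) → R a b := by
    rintro _ _ ⟨f, rfl, rfl⟩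
    exact ⟨F.i f, by rw [← F.i_hom.1, S.src_src], by rw [← F.i_hom.2.1, S.src_rng]⟩
  obtain ⟨c, hc⟩ := hR.eqvGen_iff.1 (Relation.EqvGen.mono hmorph _ _ (hS u v hu hv))
  exact ⟨c, hv ▸ hc.1, hu ▸ hc.2⟩

end FundamentalGroupoid

section PathLifting

variable {k : ℕ} {A A' : Type} {Λ : KGraphStruct k A} {Ω : KGraphStruct k A'}
  {FΛ : FundamentalGroupoid Λ} {FΩ : FundamentalGroupoid Ω} {p : A' → A}
  {pst : FΩ.B → FΛ.B}

def Liftable (FΩ : FundamentalGroupoid Ω) (p : A' → A) (pst : FΩ.B → FΛ.B) (g : FΛ.B) :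
    Prop :=
  ∀ w, Ω.IsVertex w → FΛ.i (p w) = FΛ.G.src g → ∃ c, FΩ.G.src c = FΩ.i w ∧ pst c = g

theorem liftable_i (hp : IsCovering Ω Λ p) (hpsti : ∀ a, pst (FΩ.i a) = FΛ.i (p a)) (l : A) :
    Liftable FΩ p pst (FΛ.i l) := by
  intro w hw hwl
  rw [← FΛ.i_hom.1] at hwl
  obtain ⟨m, hm, rfl⟩ := hp.src_lift w hw l
    (FΛ.i_injOn_vertices (hp.hom.isVertex_map hw) (Λ.src_src l) hwl).symm
  exact ⟨FΩ.i m, by rw [← FΩ.i_hom.1, hm], hpsti m⟩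

theorem liftable_inv_i (hp : IsCovering Ω Λ p) (hpst : IsGpdHomFun FΩ.G FΛ.G pst)
    (hpsti : ∀ a, pst (FΩ.i a) = FΛ.i (p a)) (l : A) :
    Liftable FΩ p pst (FΛ.G.inv (FΛ.i l)) := by
  intro w hw hwl
  rw [FΛ.G.src_inv, ← FΛ.i_hom.2.1] at hwl
  obtain ⟨m, hm, rfl⟩ := hp.rng_lift w hw l
    (FΛ.i_injOn_vertices (hp.hom.isVertex_map hw) (Λ.src_rng l) hwl).symm
  exact ⟨FΩ.G.inv (FΩ.i m), by rw [FΩ.G.src_inv, ← FΩ.i_hom.2.1, hm], by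
    rw [hpst.map_inv, hpsti]⟩

theorem Liftable.comp (hpst : IsGpdHomFun FΩ.G FΛ.G pst)
    (hpsti : ∀ a, pst (FΩ.i a) = FΛ.i (p a)) {a b : FΛ.B} (ha : Liftable FΩ p pst a)
    (hb : Liftable FΩ p pst b) (hab : FΛ.G.src a = FΛ.G.rng b) :
    Liftable FΩ p pst (FΛ.G.comp a b) := by
  intro w hw hwb
  rw [FΛ.G.src_comp _ _ hab] at hwb
  obtain ⟨c, hc, rfl⟩ := hb w hw hwb
  obtain ⟨u, hu, hcu⟩ := (FΩ.obj_bij _ (FΩ.G.src_rng c)).exists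
  obtain ⟨d, hd, rfl⟩ := ha u hu (by rw [hab, ← hpst.2.1, ← hcu, hpsti])
  have hdc : FΩ.G.src d = FΩ.G.rng c := hd.trans hcu
  exact ⟨FΩ.G.comp d c, by rw [FΩ.G.src_comp _ _ hdc, hc], hpst.2.2 _ _ hdc⟩

theorem liftable (hp : IsCovering Ω Λ p) (hpst : IsGpdHomFun FΩ.G FΛ.G pst)
    (hpsti : ∀ a, pst (FΩ.i a) = FΛ.i (p a)) (g : FΛ.B) : Liftable FΩ p pst g := by
  -- Lifting `g⁻¹` from `w` amounts to lifting `g` with prescribed range `w`, which is why the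
  -- induction carries the inverse along.
  refine (FΛ.induction (fun g => Liftable FΩ p pst g ∧ Liftable FΩ p pst (FΛ.G.inv g))
    (fun l => ⟨liftable_i hp hpsti l, liftable_inv_i hp hpst hpsti l⟩)
    (fun a ha => ⟨ha.2, (FΛ.G.inv_inv a).symm ▸ ha.1⟩) (fun a b ha hb hab => ?_) g).1
  refine ⟨ha.1.comp hpst hpsti hb.1 hab, ?_⟩
  rw [FΛ.G.inv_comp hab]
  exact hb.2.comp hpst hpsti ha.2 (by rw [FΛ.G.src_inv, FΛ.G.rng_inv, hab])

end PathLifting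

/-- For a connected covering `p : Ω → Λ` and a vertex `x` of
`Λ`, the family `{p₊π(Ω,v) : p v = x}` is a conjugacy class of subgroups of
`π(Λ,x)`. -/
theorem conjugacy_class_of_connected_covering {k : ℕ} {A A' : Type}
    (Λ : KGraphStruct k A) (Ω : KGraphStruct k A')
    (FΛ : FundamentalGroupoid Λ) (FΩ : FundamentalGroupoid Ω)
    (p : A' → A) (hp : IsCovering Ω Λ p) (hconn : Ω.Connected)
    (pst : FΩ.B → FΛ.B) (hpst : IsGpdHomFun FΩ.G FΛ.G pst)
    (hpsti : ∀ a, pst (FΩ.i a) = FΛ.i (p a))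
    (x : A) (hx : Λ.IsVertex x) :
    (∀ v u, Ω.IsVertex v → Ω.IsVertex u → p v = x → p u = x →
      FΛ.G.ConjAt (FΛ.i x) (pst '' FΩ.pi1 v) (pst '' FΩ.pi1 u)) ∧
    (∀ v K, Ω.IsVertex v → p v = x →
      FΛ.G.ConjAt (FΛ.i x) (pst '' FΩ.pi1 v) K →
      ∃ u, Ω.IsVertex u ∧ p u = x ∧ K = pst '' FΩ.pi1 u) := by
  constructor
  · intro v u hv hu hpv hpu
    obtain ⟨c, hc, hc'⟩ := FΩ.exists_arrow_of_connected hconn hv hu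
    refine ⟨pst c, by rw [← hpst.1, hc, hpsti, hpv], by rw [← hpst.2.1, hc', hpsti, hpu],
      ?_⟩
    have := hpst.image_isotropy_rng c
    rwa [hc, hc'] at this
  · rintro v K hv hpv ⟨g, hg, hg', rfl⟩
    obtain ⟨c, hc, rfl⟩ := liftable hp hpst hpsti g v hv (by rw [hpv, hg])
    obtain ⟨u, hu, hcu⟩ := (FΩ.obj_bij _ (FΩ.G.src_rng c)).exists
    refine ⟨u, hu, FΛ.i_injOn_vertices (hp.hom.isVertex_map hu) hx ?_, ?_⟩
    · rw [← hpsti, hcu, hpst.2.1, hg']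
    · have := hpst.image_isotropy_rng c
      rw [hc, ← hcu] at this
      exact this.symm

end KGraphCovering
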